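/- For every prime p, the families (q_{2n}/p)_{n≥1} and (q_{2n−1}/p)_{n≥1} are multipliable in ℚ_p[[X]] equipped with the product topology of coefficientwise convergence, and their infinite products λ₊ = ∏_{n≥1} (q_{2n}/p) and λ₋ = ∏_{n≥1} (q_{2n−1}/p) both have constant coefficient 1 (hence are invertible in ℚ_p[[X]]). -/

import Mathlib

open PowerSeries

/-- `qSeries p n` is the polynomial
`q_n = ((1+X)^(p^n) - 1)/((1+X)^(p^(n-1)) - 1) = Φ_p((1+X)^(p^(n-1)))`,
viewed as a power series over `ℚ_p`. -/
noncomputable def qSeries (p : ℕ) [Fact p.Prime] (n : ℕ) : PowerSeries ℚ_[p] :=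
  ∑ j ∈ Finset.range p, ((1 + PowerSeries.X) ^ (p ^ (n - 1))) ^ j

/-- The product topology of coefficientwise convergence on `ℚ_p[[X]]`. -/
noncomputable def coeffTopology (p : ℕ) [Fact p.Prime] :
    TopologicalSpace (PowerSeries ℚ_[p]) :=
  TopologicalSpace.induced (fun f n => (PowerSeries.coeff (R := ℚ_[p]) n) f) Pi.topologicalSpace

/-- `λ₊ = ∏_{n ≥ 1} q_{2n}/p` in `ℚ_p[[X]]`. -/
noncomputable def lambdaPlus (p : ℕ) [Fact p.Prime] : PowerSeries ℚ_[p] :=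
  letI := coeffTopology p
  ∏' n : ℕ, ((p : ℚ_[p])⁻¹ • qSeries p (2 * (n + 1)))

/-- `λ₋ = ∏_{n ≥ 1} q_{2n-1}/p` in `ℚ_p[[X]]`. -/
noncomputable def lambdaMinus (p : ℕ) [Fact p.Prime] : PowerSeries ℚ_[p] :=
  letI := coeffTopology p
  ∏' n : ℕ, ((p : ℚ_[p])⁻¹ • qSeries p (2 * n + 1))

/-!
Since `‖C(p^m, k)‖ ≤ p^(-m) / ‖k‖` in `ℚ_p` for `k ≥ 1`, the series `(1 + X)^(p^m)` tend to `1`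
coefficientwise, hence `q_n / p → 1`. Over a complete nonarchimedean normed ring, a family of
power series `f i = 1 + g i` tending to `1` is multipliable: the `k`-th coefficient of
`∏ i ∈ s, g i` is bounded by `∏ i ∈ s, N_k (g i)`, where `N_k` is the (submultiplicative)
`ℓ¹`-norm of the coefficients of degree `≤ k`, and these products tend to `0` along the finite
sets `s`, so `∑ s, ∏ i ∈ s, g i` converges. The continuous multiplicative map `constantCoeff`
sends the product to `∏ 1 = 1`.
-/

open Filter Topology NNReal

theorem NNReal.tendsto_prod_finset_cofinite_zero {ι : Type*} {a : ι → ℝ≥0}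
    (ha : Tendsto a cofinite (𝓝 0)) :
    Tendsto (fun s : Finset ι => ∏ i ∈ s, a i) cofinite (𝓝 0) := by
  classical
  have hT : {i | ¬ a i < 1}.Finite := eventually_cofinite.mp (ha.eventually (gt_mem_nhds one_pos))
  set B := ∏ i ∈ hT.toFinset, a i
  have hB : ∀ s : Finset ι, ∏ i ∈ s, a i ≤ B := by
    intro s
    rw [← Finset.prod_filter_mul_prod_filter_not s (· ∈ hT.toFinset)]
    calc (∏ i ∈ s with i ∈ hT.toFinset, a i) * ∏ i ∈ s with i ∉ hT.toFinset, a i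
        ≤ (∏ i ∈ s with i ∈ hT.toFinset, a i) * 1 := by
          gcongr
          refine Finset.prod_le_one' fun i hi => ?_
          simp only [Finset.mem_filter, Set.Finite.mem_toFinset, Set.mem_ofPred_eq, not_not] at hi
          exact hi.2.le
      _ ≤ B := by
          rw [mul_one]
          refine Finset.prod_le_prod_of_subset_of_one_le'
            (fun i hi => (Finset.mem_filter.mp hi).2) fun i hi _ => ?_
          simpa using hi
  rw [tendsto_order]
  refine ⟨fun _ h => (not_lt_zero h).elim, fun ε hε => ?_⟩
  set δ := ε / (B + 1)
  have hδB : δ * B < ε := by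
    rw [div_mul_eq_mul_div, div_lt_iff₀ (by positivity)]
    exact mul_lt_mul_of_pos_left (lt_add_one B) hε
  -- A finset containing some `i` with `a i < δ` has product `≤ δ * B < ε`.
  have hS : {i | ¬ a i < δ}.Finite :=
    eventually_cofinite.mp (ha.eventually (gt_mem_nhds (by positivity)))
  refine eventually_cofinite.mpr ((hS.toFinset.powerset : Set (Finset ι)).toFinite.subset ?_)
  intro s hs
  simp only [Set.mem_ofPred_eq, not_lt] at hs
  simp only [Finset.coe_powerset, Set.mem_preimage, Set.mem_powerset_iff, Finset.coe_subset]
  intro i hi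
  by_contra hiS
  simp only [Set.Finite.mem_toFinset, Set.mem_ofPred_eq, not_not] at hiS
  rw [← Finset.mul_prod_erase s a hi] at hs
  exact (hs.trans_lt ((mul_le_mul' hiS.le (hB _)).trans_lt hδB)).false

theorem norm_choose_mul_norm_le {K : Type*} [NormedDivisionRing K] [IsUltrametricDist K]
    (n k : ℕ) : ‖(n.choose k : K)‖ * ‖(k : K)‖ ≤ ‖(n : K)‖ := by
  rcases k with _ | k
  · simp
  rcases n with _ | n
  · simp
  calc ‖((n + 1).choose (k + 1) : K)‖ * ‖((k + 1 : ℕ) : K)‖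
      = ‖((n + 1 : ℕ) : K)‖ * ‖(n.choose k : K)‖ := by
        rw [← norm_mul, ← norm_mul, ← Nat.cast_mul, ← Nat.cast_mul, Nat.add_one_mul_choose_eq]
    _ ≤ ‖((n + 1 : ℕ) : K)‖ :=
        mul_le_of_le_one_right (norm_nonneg _) (IsUltrametricDist.norm_natCast_le_one K _)

namespace PowerSeries

variable {R : Type*}

theorem coeff_one_add_X_pow [Semiring R] (n k : ℕ) :
    coeff k ((1 + X : R⟦X⟧) ^ n) = n.choose k := by
  rw [show (1 + X : R⟦X⟧) = ((1 + Polynomial.X : Polynomial R) : R⟦X⟧) by simp,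
    ← Polynomial.coe_pow, Polynomial.coeff_coe, Polynomial.coeff_one_add_X_pow]

noncomputable def truncNNNorm [SeminormedRing R] (k : ℕ) (f : R⟦X⟧) : ℝ≥0 :=
  ∑ j ∈ Finset.range (k + 1), ‖coeff j f‖₊

section SeminormedCommRing

variable [SeminormedCommRing R]

theorem nnnorm_coeff_le_truncNNNorm (k : ℕ) (f : R⟦X⟧) : ‖coeff k f‖₊ ≤ truncNNNorm k f :=
  Finset.single_le_sum (f := fun j => ‖coeff j f‖₊) (fun _ _ => zero_le)
    (Finset.self_mem_range_succ k)

theorem truncNNNorm_mul_le (k : ℕ) (f g : R⟦X⟧) :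
    truncNNNorm k (f * g) ≤ truncNNNorm k f * truncNNNorm k g := by
  let F : ℕ → ℕ → ℝ≥0 := fun a b => ‖coeff a f‖₊ * ‖coeff b g‖₊
  calc truncNNNorm k (f * g)
      ≤ ∑ j ∈ Finset.range (k + 1), ∑ a ∈ Finset.range (j + 1), F a (j - a) := by
        refine Finset.sum_le_sum fun j _ => ?_
        rw [coeff_mul, ← Finset.Nat.sum_antidiagonal_eq_sum_range_succ F]
        exact (nnnorm_sum_le _ _).trans (Finset.sum_le_sum fun _ _ => nnnorm_mul_le _ _)
    _ = ∑ a ∈ Finset.range (k + 1), ∑ b ∈ Finset.range (k + 1 - a), F a b :=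
        Finset.sum_range_diag_flip (k + 1) F
    _ ≤ ∑ a ∈ Finset.range (k + 1), ∑ b ∈ Finset.range (k + 1), F a b := by
        gcongr with a
        exact Nat.sub_le _ _
    _ = truncNNNorm k f * truncNNNorm k g := by
        rw [truncNNNorm, truncNNNorm, Finset.sum_mul_sum]

theorem truncNNNorm_prod_le [NormOneClass R] {ι : Type*} (k : ℕ) (s : Finset ι)
    (f : ι → R⟦X⟧) : truncNNNorm k (∏ i ∈ s, f i) ≤ ∏ i ∈ s, truncNNNorm k (f i) := by
  refine Finset.le_prod_of_submultiplicative _ ?_ (truncNNNorm_mul_le k) s f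
  simp [truncNNNorm, Finset.sum_range_succ', coeff_one]

open WithPiTopology in
theorem tendsto_truncNNNorm_zero {ι : Type*} {l : Filter ι} {f : ι → R⟦X⟧}
    (hf : Tendsto f l (𝓝 0)) (k : ℕ) : Tendsto (fun i => truncNNNorm k (f i)) l (𝓝 0) := by
  rw [tendsto_iff_coeff_tendsto] at hf
  simpa [truncNNNorm] using tendsto_finsetSum (Finset.range (k + 1)) fun j _ => (hf j).nnnorm

end SeminormedCommRing

namespace WithPiTopology

theorem multipliable_of_tendsto_cofinite_one [NormedCommRing R] [NormOneClass R]
    [IsUltrametricDist R] [CompleteSpace R] {ι : Type*} {f : ι → R⟦X⟧}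
    (hf : Tendsto f cofinite (𝓝 1)) : Multipliable f := by
  have hg : Tendsto (fun i => f i - 1) cofinite (𝓝 0) := by simpa using hf.sub_const 1
  suffices Multipliable fun i => 1 + (f i - 1) by simpa using this
  refine multipliable_one_add_of_summable_prod ((summable_iff_summable_coeff R).mpr fun k => ?_)
  refine NonarchimedeanAddGroup.summable_of_tendsto_cofinite_zero (squeeze_zero_norm' ?_
    (NNReal.tendsto_coe.mpr (NNReal.tendsto_prod_finset_cofinite_zero
      (tendsto_truncNNNorm_zero hg k))))
  refine Eventually.of_forall fun s => ?_
  rw [← coe_nnnorm, NNReal.coe_le_coe]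
  exact (nnnorm_coeff_le_truncNNNorm k _).trans (truncNNNorm_prod_le k s _)

theorem constantCoeff_tprod_eq_one [CommSemiring R] [TopologicalSpace R] [T2Space R]
    {ι : Type*} {f : ι → R⟦X⟧} (hf : Multipliable f) (h : ∀ i, constantCoeff (f i) = 1) :
    constantCoeff (∏' i, f i) = 1 := by
  rw [hf.map_tprod _ (continuous_constantCoeff R)]
  simp [h]

end WithPiTopology

end PowerSeries

open PowerSeries.WithPiTopology

section Padic

variable (p : ℕ) [Fact p.Prime]

theorem coeffTopology_eq_withPiTopology :
    coeffTopology p = PowerSeries.WithPiTopology.instTopologicalSpace ℚ_[p] := by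
  have hmk : Continuous (PowerSeries.mk : (ℕ → ℚ_[p]) → ℚ_[p]⟦X⟧) := by
    rw [continuous_iff_continuousAt]
    exact fun a => (tendsto_iff_coeff_tendsto ℚ_[p] _ _ _).mpr fun d => by
      simpa using (continuous_apply d).tendsto a
  have hcoeff : Continuous fun (f : ℚ_[p]⟦X⟧) (n : ℕ) => coeff n f :=
    continuous_pi (continuous_coeff ℚ_[p])
  exact (Function.LeftInverse.isEmbedding (fun f => ext fun n => coeff_mk n _) hmk
    hcoeff).eq_induced.symm

theorem tendsto_one_add_X_pow_prime_pow :
    Tendsto (fun m : ℕ => (1 + X : ℚ_[p]⟦X⟧) ^ (p ^ m)) atTop (𝓝 1) := by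
  rw [tendsto_iff_coeff_tendsto]
  intro k
  simp only [coeff_one_add_X_pow, coeff_one]
  rcases eq_or_ne k 0 with rfl | hk
  · simp
  rw [if_neg hk]
  have hk' : 0 < ‖(k : ℚ_[p])‖ := by simp [hk]
  refine squeeze_zero_norm (a := fun m => ‖(k : ℚ_[p])‖⁻¹ * ‖(p : ℚ_[p])‖ ^ m) (fun m => ?_) ?_
  · rw [← div_eq_inv_mul, le_div_iff₀ hk', ← norm_pow]
    exact_mod_cast norm_choose_mul_norm_le (p ^ m) k
  · simpa using (tendsto_pow_atTop_nhds_zero_of_lt_one (norm_nonneg _)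
      (Padic.norm_p_lt_one (p := p))).const_mul ‖(k : ℚ_[p])‖⁻¹

theorem tendsto_inv_smul_qSeries :
    Tendsto (fun n => (p : ℚ_[p])⁻¹ • qSeries p n) atTop (𝓝 1) := by
  have hQ : Continuous fun x : ℚ_[p]⟦X⟧ => (p : ℚ_[p])⁻¹ • ∑ j ∈ Finset.range p, x ^ j := by
    fun_prop
  have hQ1 : (p : ℚ_[p])⁻¹ • ∑ j ∈ Finset.range p, (1 : ℚ_[p]⟦X⟧) ^ j = 1 := by
    have hp : (p : ℚ_[p]) ≠ 0 := Nat.cast_ne_zero.mpr (Fact.out : p.Prime).ne_zero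
    simp only [one_pow, Finset.sum_const, Finset.card_range, nsmul_eq_mul, mul_one, smul_eq_C_mul]
    rw [← map_natCast (C (R := ℚ_[p])), ← map_mul, inv_mul_cancel₀ hp, map_one]
  rw [← hQ1]
  exact (hQ.tendsto 1).comp ((tendsto_one_add_X_pow_prime_pow p).comp (tendsto_sub_atTop_nat 1))

theorem multipliable_inv_smul_qSeries_comp {m : ℕ → ℕ} (hm : Tendsto m atTop atTop) :
    Multipliable fun n => (p : ℚ_[p])⁻¹ • qSeries p (m n) :=
  multipliable_of_tendsto_cofinite_one
    (Nat.cofinite_eq_atTop ▸ (tendsto_inv_smul_qSeries p).comp hm)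

theorem constantCoeff_inv_smul_qSeries (n : ℕ) :
    constantCoeff ((p : ℚ_[p])⁻¹ • qSeries p n) = 1 := by
  simp [qSeries]

end Padic

/-- The families `(q_{2n}/p)_{n ≥ 1}` and `(q_{2n-1}/p)_{n ≥ 1}` are multipliable in
`ℚ_p[[X]]` for the product topology of coefficientwise convergence, and the infinite
products `λ₊` and `λ₋` both have constant coefficient `1`. -/
theorem lambdaPlus_lambdaMinus_multipliable_and_constantCoeff
    (p : ℕ) [Fact p.Prime] :
    (@Multipliable (PowerSeries ℚ_[p]) ℕ _ (coeffTopology p)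
      (fun n : ℕ => ((p : ℚ_[p])⁻¹ • qSeries p (2 * (n + 1)))) (SummationFilter.unconditional ℕ)) ∧
    (@Multipliable (PowerSeries ℚ_[p]) ℕ _ (coeffTopology p)
      (fun n : ℕ => ((p : ℚ_[p])⁻¹ • qSeries p (2 * n + 1))) (SummationFilter.unconditional ℕ)) ∧
    PowerSeries.constantCoeff (R := ℚ_[p]) (lambdaPlus p) = 1 ∧
    PowerSeries.constantCoeff (R := ℚ_[p]) (lambdaMinus p) = 1 := by
  rw [lambdaPlus, lambdaMinus, coeffTopology_eq_withPiTopology]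
  have hplus := multipliable_inv_smul_qSeries_comp p (m := fun n => 2 * (n + 1))
    (tendsto_atTop_mono (fun n => (by omega : n ≤ 2 * (n + 1))) tendsto_id)
  have hminus := multipliable_inv_smul_qSeries_comp p (m := fun n => 2 * n + 1)
    (tendsto_atTop_mono (fun n => (by omega : n ≤ 2 * n + 1)) tendsto_id)
  exact ⟨hplus, hminus,
    constantCoeff_tprod_eq_one hplus fun _ => constantCoeff_inv_smul_qSeries p _,
    constantCoeff_tprod_eq_one hminus fun _ => constantCoeff_inv_smul_qSeries p _⟩
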